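/- Let n ≥ 1, let A and B be Hermitian n×n complex matrices all of whose eigenvalues lie in the open interval (−1,1), let f, g ∈ 𝔥, and let X be an arbitrary n×n complex matrix. Then for every unitarily invariant norm N on the 2n×2n complex matrices, N((f(A)Xg(B) + X) ⊕ 0) ≤ (4√2/(d_A d_B)) · N(AXB ⊕ X), where C ⊕ D denotes the 2n×2n block-diagonal matrix with diagonal blocks C and D. -/

import Mathlib

open Matrix
open scoped ComplexOrder

/-- `f(A)` for a Hermitian matrix `A`, defined via the spectral decomposition:
`f(A) = U diag(f(λ₁),…,f(λₙ)) U*`. -/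
noncomputable def herFun {n : ℕ} {A : Matrix (Fin n) (Fin n) ℂ} (hA : A.IsHermitian)
    (f : ℂ → ℂ) : Matrix (Fin n) (Fin n) ℂ :=
  (hA.eigenvectorUnitary : Matrix (Fin n) (Fin n) ℂ) *
    Matrix.diagonal (fun i => f (hA.eigenvalues i : ℂ)) *
    star (hA.eigenvectorUnitary : Matrix (Fin n) (Fin n) ℂ)

/-- `|X| = (X*X)^{1/2}`, the positive semidefinite absolute value of a matrix. -/
noncomputable def matAbs {n : ℕ} (X : Matrix (Fin n) (Fin n) ℂ) : Matrix (Fin n) (Fin n) ℂ :=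
  ((Matrix.posSemidef_conjTranspose_mul_self X).isHermitian.eigenvectorUnitary : Matrix (Fin n) (Fin n) ℂ) *
    Matrix.diagonal ((↑) ∘ Real.sqrt ∘ (Matrix.posSemidef_conjTranspose_mul_self X).isHermitian.eigenvalues) *
    (star (Matrix.posSemidef_conjTranspose_mul_self X).isHermitian.eigenvectorUnitary : Matrix (Fin n) (Fin n) ℂ)

/-- `d_A = min { 1 - |λⱼ| }`, the distance from the unit circle to the spectrum of a
Hermitian matrix `A` whose eigenvalues lie in `(-1,1)`. -/
noncomputable def dDist {n : ℕ} {A : Matrix (Fin n) (Fin n) ℂ} (hA : A.IsHermitian) : ℝ :=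
  ⨅ i, (1 - |hA.eigenvalues i|)

/-- Membership in the class `𝔥`: analytic on the open unit disk, positive real part there,
and value `1` at the origin. -/
def MemH (f : ℂ → ℂ) : Prop :=
  DifferentiableOn ℂ f (Metric.ball (0 : ℂ) 1) ∧
    (∀ z ∈ Metric.ball (0 : ℂ) 1, 0 < (f z).re) ∧ f 0 = 1

/-- A function `N` on `n × n` complex matrices is a unitarily invariant norm. -/
def IsUnitarilyInvariantNorm {m : Type*} [Fintype m] [DecidableEq m]
    (N : Matrix m m ℂ → ℝ) : Prop :=
  (∀ X, N X = 0 ↔ X = 0) ∧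
    (∀ (c : ℂ) X, N (c • X) = ‖c‖ * N X) ∧
    (∀ X Y, N (X + Y) ≤ N X + N Y) ∧
    (∀ (U V : Matrix.unitaryGroup m ℂ) (X : Matrix m m ℂ),
      N ((U : Matrix m m ℂ) * X * (V : Matrix m m ℂ)) = N X)

/-!
For `f ∈ 𝔥`, the Borel–Carathéodory inequality applied to `1 - f` gives the Harnack bound
`‖f z‖ ≤ (1 + ‖z‖) / (1 - ‖z‖)`, so `‖f(λ)‖ ≤ 2 / d_A` on the spectrum of `A`. A diagonal matrix
whose entries are bounded by `c` is `c / 2` times a sum of two unitary diagonal matrices, so by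
unitary invariance and the triangle inequality it scales any unitarily invariant norm by at most
`c`. Diagonalising `A` and `B` gives `N(f(A) X g(B) ⊕ 0) ≤ (4 / (d_A d_B)) N(X ⊕ 0)`, and pinching
(`0 ⊕ X` is the average of `C ⊕ X` and `(-C) ⊕ X`) gives `N(X ⊕ 0) ≤ N(AXB ⊕ X)`. Finally
`4 / t + 1 ≤ 4√2 / t` for `0 < t ≤ 1`.
-/

theorem MemH.norm_le {f : ℂ → ℂ} (hf : MemH f) {z : ℂ} (hz : ‖z‖ < 1) :
    ‖f z‖ ≤ (1 + ‖z‖) / (1 - ‖z‖) := by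
  obtain ⟨hdiff, hre, h0⟩ := hf
  have hbc : ‖1 - f z‖ ≤ 2 * 1 * ‖z‖ / (1 - ‖z‖) :=
    Complex.borelCaratheodory_zero one_pos ((differentiableOn_const 1).sub hdiff)
      (fun w hw => by simp [(hre w hw).le]) one_pos (mem_ball_zero_iff.mpr hz) (by simp [h0])
  have hpos : 0 < 1 - ‖z‖ := sub_pos.mpr hz
  calc ‖f z‖ ≤ ‖(1 : ℂ)‖ + ‖f z - 1‖ := norm_le_norm_add_norm_sub' _ _
    _ ≤ 1 + 2 * 1 * ‖z‖ / (1 - ‖z‖) := by rw [norm_one, norm_sub_rev]; gcongr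
    _ = (1 + ‖z‖) / (1 - ‖z‖) := by field_simp; ring

section dDist

variable {n : ℕ} {A : Matrix (Fin n) (Fin n) ℂ} (hA : A.IsHermitian)

theorem dDist_le (i : Fin n) : dDist hA ≤ 1 - |hA.eigenvalues i| :=
  ciInf_le (Set.finite_range _).bddBelow i

theorem dDist_le_one [Nonempty (Fin n)] : dDist hA ≤ 1 := by
  obtain ⟨i⟩ := ‹Nonempty (Fin n)›
  linarith [dDist_le hA i, abs_nonneg (hA.eigenvalues i)]

theorem dDist_pos [Nonempty (Fin n)] (hAspec : ∀ i, |hA.eigenvalues i| < 1) :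
    0 < dDist hA := by
  obtain ⟨i, hi⟩ := exists_eq_ciInf_of_finite (f := fun i => 1 - |hA.eigenvalues i|)
  rw [dDist, ← hi]
  linarith [hAspec i]

theorem MemH.norm_apply_eigenvalues_le {f : ℂ → ℂ} (hf : MemH f)
    (hAspec : ∀ i, |hA.eigenvalues i| < 1) (i : Fin n) :
    ‖f (hA.eigenvalues i)‖ ≤ 2 / dDist hA := by
  have : Nonempty (Fin n) := ⟨i⟩
  have hev : ‖(hA.eigenvalues i : ℂ)‖ < 1 := by simpa using hAspec i
  calc ‖f (hA.eigenvalues i)‖ ≤ (1 + |hA.eigenvalues i|) / (1 - |hA.eigenvalues i|) := by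
        simpa using hf.norm_le hev
    _ ≤ 2 / (1 - |hA.eigenvalues i|) := by gcongr <;> linarith [hAspec i]
    _ ≤ 2 / dDist hA := by gcongr; exacts [dDist_pos hA hAspec, dDist_le hA i]

end dDist

/-- With `φ = arg z` and `cos α = ‖z‖ / c`: `z = c cos α · e^{iφ}` and
`2 cos α · e^{iφ} = e^{i(φ + α)} + e^{i(φ - α)}`. -/
theorem exists_norm_eq_one_eq_mul_add {c : ℝ} {z : ℂ} (hz : ‖z‖ ≤ c) :
    ∃ u v : ℂ, ‖u‖ = 1 ∧ ‖v‖ = 1 ∧ z = (c / 2 : ℂ) * (u + v) := by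
  have hc : 0 ≤ c := (norm_nonneg z).trans hz
  set α := Real.arccos (‖z‖ / c)
  have hcos : Real.cos α = ‖z‖ / c :=
    Real.cos_arccos (by linarith [div_nonneg (norm_nonneg z) hc]) (div_le_one_of_le₀ hz hc)
  refine ⟨Complex.exp ((z.arg + α : ℝ) * Complex.I), Complex.exp ((z.arg - α : ℝ) * Complex.I),
    Complex.norm_exp_ofReal_mul_I _, Complex.norm_exp_ofReal_mul_I _, ?_⟩
  have hsum : Complex.exp ((z.arg + α : ℝ) * Complex.I) + Complex.exp ((z.arg - α : ℝ) * Complex.I)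
      = 2 * (Real.cos α : ℂ) * Complex.exp (z.arg * Complex.I) := by
    push_cast
    rw [Complex.cos, neg_mul, Complex.exp_neg, add_mul, sub_mul, Complex.exp_add, Complex.exp_sub]
    field_simp
  have hcz : c * (‖z‖ / c) = ‖z‖ :=
    mul_div_cancel_of_imp' fun h => le_antisymm (h ▸ hz) (norm_nonneg z)
  calc z = (‖z‖ : ℂ) * Complex.exp (z.arg * Complex.I) := (Complex.norm_mul_exp_arg_mul_I z).symm
    _ = ((c * Real.cos α : ℝ) : ℂ) * Complex.exp (z.arg * Complex.I) := by rw [hcos, hcz]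
    _ = _ := by rw [hsum]; push_cast; ring

namespace Matrix

variable {m o α : Type*} [Fintype m] [DecidableEq m] [Fintype o] [DecidableEq o]

theorem fromBlocks_mem_unitaryGroup [CommRing α] [StarRing α] {U : Matrix m m α}
    {V : Matrix o o α} (hU : U ∈ unitaryGroup m α) (hV : V ∈ unitaryGroup o α) :
    fromBlocks U 0 0 V ∈ unitaryGroup (m ⊕ o) α := by
  rw [mem_unitaryGroup_iff] at hU hV ⊢
  rw [star_eq_conjTranspose, fromBlocks_conjTranspose, fromBlocks_multiply]
  simp [← star_eq_conjTranspose, hU, hV]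

theorem diagonal_mem_unitaryGroup {u : m → ℂ} (hu : ∀ i, ‖u i‖ = 1) :
    diagonal u ∈ unitaryGroup m ℂ := by
  rw [mem_unitaryGroup_iff, star_eq_conjTranspose, diagonal_conjTranspose, diagonal_mul_diagonal,
    ← diagonal_one]
  congr 1
  funext i
  simp [Complex.mul_conj', hu i]

end Matrix

namespace IsUnitarilyInvariantNorm

variable {m : Type*} [Fintype m] [DecidableEq m]

section

variable {ν : Matrix m m ℂ → ℝ} (hν : IsUnitarilyInvariantNorm ν)
include hν

theorem map_zero : ν 0 = 0 := (hν.1 0).2 rfl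

theorem nonneg (Y : Matrix m m ℂ) : 0 ≤ ν Y := by
  have h := hν.2.2.1 Y (-Y)
  have hneg : ν (-Y) = ν Y := by simpa using hν.2.1 (-1) Y
  rw [add_neg_cancel, hν.map_zero, hneg] at h
  linarith

theorem map_mul_mul {U V : Matrix m m ℂ} (hU : U ∈ unitaryGroup m ℂ) (hV : V ∈ unitaryGroup m ℂ)
    (Y : Matrix m m ℂ) : ν (U * Y * V) = ν Y :=
  hν.2.2.2 ⟨U, hU⟩ ⟨V, hV⟩ Y

theorem le_of_eq_smul_add {c : ℝ} (hc : 0 ≤ c) {M M₁ M₂ Y : Matrix m m ℂ}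
    (hM : M = (c / 2 : ℂ) • (M₁ + M₂)) (h₁ : ν M₁ = ν Y) (h₂ : ν M₂ = ν Y) : ν M ≤ c * ν Y := by
  have hnorm : ‖(c / 2 : ℂ)‖ = c / 2 := by
    rw [norm_div, Complex.norm_real, Real.norm_of_nonneg hc]; norm_num
  calc ν M = c / 2 * ν (M₁ + M₂) := by rw [hM, hν.2.1, hnorm]
    _ ≤ c / 2 * (ν M₁ + ν M₂) := by gcongr; exact hν.2.2.1 _ _
    _ = c * ν Y := by rw [h₁, h₂]; ring

theorem diagonal_mul_le {c : ℝ} {d : m → ℂ} (hd : ∀ i, ‖d i‖ ≤ c) (hc : 0 ≤ c)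
    (Y : Matrix m m ℂ) : ν (diagonal d * Y) ≤ c * ν Y := by
  choose u v hu hv huv using fun i => exists_norm_eq_one_eq_mul_add (hd i)
  refine hν.le_of_eq_smul_add hc (M₁ := diagonal u * Y) (M₂ := diagonal v * Y) ?_ ?_ ?_
  · rw [← add_mul, ← smul_mul_assoc, diagonal_add, ← diagonal_smul]
    congr 2
    funext i
    exact huv i
  · simpa using hν.map_mul_mul (diagonal_mem_unitaryGroup hu) (one_mem _) Y
  · simpa using hν.map_mul_mul (diagonal_mem_unitaryGroup hv) (one_mem _) Y

theorem mul_diagonal_le {c : ℝ} {d : m → ℂ} (hd : ∀ i, ‖d i‖ ≤ c) (hc : 0 ≤ c)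
    (Y : Matrix m m ℂ) : ν (Y * diagonal d) ≤ c * ν Y := by
  choose u v hu hv huv using fun i => exists_norm_eq_one_eq_mul_add (hd i)
  refine hν.le_of_eq_smul_add hc (M₁ := Y * diagonal u) (M₂ := Y * diagonal v) ?_ ?_ ?_
  · rw [← mul_add, ← mul_smul_comm, diagonal_add, ← diagonal_smul]
    congr 2
    funext i
    exact huv i
  · simpa using hν.map_mul_mul (one_mem _) (diagonal_mem_unitaryGroup hu) Y
  · simpa using hν.map_mul_mul (one_mem _) (diagonal_mem_unitaryGroup hv) Y

end

theorem herFun_mul_mul_herFun_le {n : ℕ} {ν : Matrix (Fin n) (Fin n) ℂ → ℝ}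
    (hν : IsUnitarilyInvariantNorm ν) {A B : Matrix (Fin n) (Fin n) ℂ} (hA : A.IsHermitian)
    (hB : B.IsHermitian) {f g : ℂ → ℂ} {c₁ c₂ : ℝ} (hf : ∀ i, ‖f (hA.eigenvalues i)‖ ≤ c₁)
    (hg : ∀ i, ‖g (hB.eigenvalues i)‖ ≤ c₂) (hc₁ : 0 ≤ c₁) (hc₂ : 0 ≤ c₂)
    (X : Matrix (Fin n) (Fin n) ℂ) : ν (herFun hA f * X * herFun hB g) ≤ c₁ * c₂ * ν X := by
  set U : Matrix (Fin n) (Fin n) ℂ := ↑hA.eigenvectorUnitary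
  set V : Matrix (Fin n) (Fin n) ℂ := ↑hB.eigenvectorUnitary
  have hU : U ∈ unitaryGroup (Fin n) ℂ := hA.eigenvectorUnitary.prop
  have hV : V ∈ unitaryGroup (Fin n) ℂ := hB.eigenvectorUnitary.prop
  set Y := star U * X * V
  have hfXg : herFun hA f * X * herFun hB g = U * (diagonal (fun i => f (hA.eigenvalues i)) *
      Y * diagonal (fun i => g (hB.eigenvalues i))) * star V := by
    simp only [herFun, Y, U, V, Matrix.mul_assoc]
  calc ν (herFun hA f * X * herFun hB g)
      = ν (diagonal (fun i => f (hA.eigenvalues i)) * (Y * diagonal fun i => g (hB.eigenvalues i)))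
        := by rw [hfXg, hν.map_mul_mul hU (Unitary.star_mem hV), Matrix.mul_assoc]
    _ ≤ c₁ * (c₂ * ν Y) := by
        grw [hν.diagonal_mul_le hf hc₁, hν.mul_diagonal_le hg hc₂]
    _ = c₁ * c₂ * ν X := by
        rw [hν.map_mul_mul (Unitary.star_mem hU) hV, mul_assoc]

section

variable {N : Matrix (m ⊕ m) (m ⊕ m) ℂ → ℝ} (hN : IsUnitarilyInvariantNorm N)
include hN

theorem fromBlocks_mul_mul {U V : Matrix m m ℂ} (hU : U ∈ unitaryGroup m ℂ)
    (hV : V ∈ unitaryGroup m ℂ) (C D : Matrix m m ℂ) :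
    N (fromBlocks (U * C * V) 0 0 D) = N (fromBlocks C 0 0 D) := by
  rw [← hN.map_mul_mul (fromBlocks_mem_unitaryGroup hU (one_mem _))
    (fromBlocks_mem_unitaryGroup hV (one_mem _)) (fromBlocks C 0 0 D)]
  simp [fromBlocks_multiply]

theorem fromBlocks_comm (C D : Matrix m m ℂ) :
    N (fromBlocks C 0 0 D) = N (fromBlocks D 0 0 C) := by
  have hS : fromBlocks (0 : Matrix m m ℂ) 1 1 0 ∈ unitaryGroup (m ⊕ m) ℂ := by
    rw [mem_unitaryGroup_iff, star_eq_conjTranspose, fromBlocks_conjTranspose]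
    simp [fromBlocks_multiply]
  rw [← hN.map_mul_mul hS hS (fromBlocks C 0 0 D)]
  simp [fromBlocks_multiply]

theorem fromBlocks_zero_left_le (C D : Matrix m m ℂ) :
    N (fromBlocks 0 0 0 D) ≤ N (fromBlocks C 0 0 D) := by
  have hneg : (-1 : Matrix m m ℂ) ∈ unitaryGroup m ℂ := by simp [mem_unitaryGroup_iff]
  have h := hN.le_of_eq_smul_add zero_le_one (M := fromBlocks 0 0 0 D) (M₁ := fromBlocks C 0 0 D)
    (M₂ := fromBlocks (-1 * C * 1) 0 0 D) ?_ rfl (hN.fromBlocks_mul_mul hneg (one_mem _) C D)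
  · rwa [one_mul] at h
  · rw [fromBlocks_add, fromBlocks_smul]
    congr 1 <;> simp
    module

theorem comp_fromBlocks_zero : IsUnitarilyInvariantNorm fun Y : Matrix m m ℂ =>
    N (fromBlocks Y 0 0 0) := by
  refine ⟨fun Y => ?_, fun c Y => ?_, fun Y Z => ?_, fun U V Y => ?_⟩
  · rw [hN.1, ← fromBlocks_zero, fromBlocks_inj]
    simp
  · rw [← hN.2.1, fromBlocks_smul]
    simp
  · simpa [fromBlocks_add] using hN.2.2.1 (fromBlocks Y 0 0 0) (fromBlocks Z 0 0 0)
  · exact hN.fromBlocks_mul_mul U.prop V.prop Y 0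

end

end IsUnitarilyInvariantNorm

theorem four_div_add_one_le_mul_sqrt_two_div {t : ℝ} (ht : 0 < t) (ht₁ : t ≤ 1) :
    4 / t + 1 ≤ 4 * √2 / t := by
  rw [div_add_one ht.ne', div_le_div_iff_of_pos_right ht]
  nlinarith [Real.sq_sqrt (zero_le_two : (0 : ℝ) ≤ 2), Real.sqrt_nonneg 2]

theorem stmt2_general {n : ℕ}
    {A B : Matrix (Fin n) (Fin n) ℂ} (hA : A.IsHermitian) (hB : B.IsHermitian)
    (hAspec : ∀ i, |hA.eigenvalues i| < 1) (hBspec : ∀ i, |hB.eigenvalues i| < 1)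
    {f g : ℂ → ℂ} (hf : MemH f) (hg : MemH g)
    (X : Matrix (Fin n) (Fin n) ℂ)
    (N : Matrix (Fin n ⊕ Fin n) (Fin n ⊕ Fin n) ℂ → ℝ) (hN : IsUnitarilyInvariantNorm N) :
    N (Matrix.fromBlocks (herFun hA f * X * herFun hB g + X) 0 0 0) ≤
      (4 * Real.sqrt 2 / (dDist hA * dDist hB)) *
        N (Matrix.fromBlocks (A * X * B) 0 0 X) := by
  rcases isEmpty_or_nonempty (Fin n) with hn | hn
  · have hN₀ (M : Matrix (Fin n ⊕ Fin n) (Fin n ⊕ Fin n) ℂ) : N M = 0 := by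
      rw [Subsingleton.elim M 0, hN.map_zero]
    simp [hN₀]
  have hν := hN.comp_fromBlocks_zero
  have hdA := dDist_pos hA hAspec
  have hdB := dDist_pos hB hBspec
  calc N (fromBlocks (herFun hA f * X * herFun hB g + X) 0 0 0)
      ≤ N (fromBlocks (herFun hA f * X * herFun hB g) 0 0 0) + N (fromBlocks X 0 0 0) :=
        hν.2.2.1 _ _
    _ ≤ 2 / dDist hA * (2 / dDist hB) * N (fromBlocks X 0 0 0) + N (fromBlocks X 0 0 0) := by
        grw [hν.herFun_mul_mul_herFun_le hA hB (hf.norm_apply_eigenvalues_le hA hAspec)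
          (hg.norm_apply_eigenvalues_le hB hBspec) (by positivity) (by positivity)]
    _ = (4 / (dDist hA * dDist hB) + 1) * N (fromBlocks X 0 0 0) := by
        field_simp
        ring
    _ ≤ 4 * √2 / (dDist hA * dDist hB) * N (fromBlocks X 0 0 0) := by
        gcongr
        · exact hν.nonneg X
        · exact four_div_add_one_le_mul_sqrt_two_div (by positivity)
            (mul_le_one₀ (dDist_le_one hA) hdB.le (dDist_le_one hB))
    _ ≤ 4 * √2 / (dDist hA * dDist hB) * N (fromBlocks (A * X * B) 0 0 X) := by
        rw [hN.fromBlocks_comm]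
        gcongr
        exact hN.fromBlocks_zero_left_le _ _

/-- **Remark 2.2, Hermitian matrix case.** -/
theorem stmt2 {n : ℕ} (hn : 1 ≤ n)
    {A B : Matrix (Fin n) (Fin n) ℂ} (hA : A.IsHermitian) (hB : B.IsHermitian)
    (hAspec : ∀ i, |hA.eigenvalues i| < 1) (hBspec : ∀ i, |hB.eigenvalues i| < 1)
    {f g : ℂ → ℂ} (hf : MemH f) (hg : MemH g)
    (X : Matrix (Fin n) (Fin n) ℂ)
    (N : Matrix (Fin n ⊕ Fin n) (Fin n ⊕ Fin n) ℂ → ℝ) (hN : IsUnitarilyInvariantNorm N) :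
    N (Matrix.fromBlocks (herFun hA f * X * herFun hB g + X) 0 0 0) ≤
      (4 * Real.sqrt 2 / (dDist hA * dDist hB)) *
        N (Matrix.fromBlocks (A * X * B) 0 0 X) :=
  stmt2_general hA hB hAspec hBspec hf hg X N hN
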